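/- Let g : ℝ^D → ℝ^d be L-Lipschitz in ℓ₂ norm, and let c₁, c₂ ∈ ℝ^d be distinct with ‖g(x) − c₁‖₂ < ‖g(x) − c₂‖₂ for some x ∈ ℝ^D. Set γ = (‖c₂ − g(x)‖₂² − ‖c₁ − g(x)‖₂²)/(2‖c₂ − c₁‖₂) and r = γ/L. Then for every δ ∈ ℝ^D with ‖δ‖₂ < r, we have ‖g(x+δ) − c₁‖₂ < ‖g(x+δ) − c₂‖₂. -/

import Mathlib

/-!
For prototypes `a ≠ b`, the gap `‖y - b‖² - ‖y - a‖²` is an affine function of `y` with linear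
part `-2⟪·, b - a⟫`, so by Cauchy–Schwarz it drops by at most `2‖b - a‖ ‖y - z‖` between `z`
and `y`. The margin `γ` is exactly the gap at `g x` divided by `2‖b - a‖` (the distance from
`g x` to the bisecting hyperplane), and Lipschitz continuity keeps `g (x + δ)` within `L ‖δ‖ < γ`
of `g x`.
-/

section InnerProductSpace

variable {E : Type*} [NormedAddCommGroup E] [InnerProductSpace ℝ E]

theorem norm_sub_sq_sub_norm_sub_sq_eq (a b y z : E) :
    ‖y - b‖ ^ 2 - ‖y - a‖ ^ 2 =
      ‖z - b‖ ^ 2 - ‖z - a‖ ^ 2 - 2 * inner ℝ (y - z) (b - a) := by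
  simp only [norm_sub_sq_real, inner_sub_left, inner_sub_right]
  ring

theorem norm_sub_lt_norm_sub_of_norm_sub_lt_margin {a b : E} (hab : a ≠ b) {y z : E}
    (h : ‖y - z‖ < (‖b - z‖ ^ 2 - ‖a - z‖ ^ 2) / (2 * ‖b - a‖)) :
    ‖y - a‖ < ‖y - b‖ := by
  have hba : 0 < ‖b - a‖ := norm_pos_iff.mpr (sub_ne_zero.mpr hab.symm)
  rw [norm_sub_rev b, norm_sub_rev a, lt_div_iff₀ (by positivity)] at h
  have hcs : inner ℝ (y - z) (b - a) ≤ ‖y - z‖ * ‖b - a‖ := real_inner_le_norm _ _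
  have hsq : ‖y - a‖ ^ 2 < ‖y - b‖ ^ 2 := by
    linarith [norm_sub_sq_sub_norm_sub_sq_eq a b y z]
  exact lt_of_pow_lt_pow_left₀ 2 (norm_nonneg _) hsq

end InnerProductSpace

theorem robustness_guarantee_general
    (D d : ℕ) (L : ℝ) (hL : 0 < L)
    (g : EuclideanSpace ℝ (Fin D) → EuclideanSpace ℝ (Fin d))
    (hLip : ∀ x x', ‖g x - g x'‖ ≤ L * ‖x - x'‖)
    (c₁ c₂ : EuclideanSpace ℝ (Fin d)) (hne : c₁ ≠ c₂)
    (x : EuclideanSpace ℝ (Fin D))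
    (γ r : ℝ)
    (hγ : γ = (‖c₂ - g x‖ ^ 2 - ‖c₁ - g x‖ ^ 2) / (2 * ‖c₂ - c₁‖))
    (hr : r = γ / L) :
    ∀ δ : EuclideanSpace ℝ (Fin D), ‖δ‖ < r →
      ‖g (x + δ) - c₁‖ < ‖g (x + δ) - c₂‖ := by
  intro δ hδ
  have hmove : ‖g (x + δ) - g x‖ < γ :=
    calc ‖g (x + δ) - g x‖ ≤ L * ‖δ‖ := by simpa using hLip (x + δ) x
      _ < L * r := mul_lt_mul_of_pos_left hδ hL
      _ = γ := by rw [hr, mul_div_cancel₀ _ hL.ne']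
  exact norm_sub_lt_norm_sub_of_norm_sub_lt_margin hne (hγ ▸ hmove)

theorem robustness_guarantee
    (D d : ℕ) (L : ℝ) (hL : 0 < L)
    (g : EuclideanSpace ℝ (Fin D) → EuclideanSpace ℝ (Fin d))
    (hLip : ∀ x x', ‖g x - g x'‖ ≤ L * ‖x - x'‖)
    (c₁ c₂ : EuclideanSpace ℝ (Fin d)) (hne : c₁ ≠ c₂)
    (x : EuclideanSpace ℝ (Fin D))
    (hcloser : ‖g x - c₁‖ < ‖g x - c₂‖)
    (γ r : ℝ)
    (hγ : γ = (‖c₂ - g x‖ ^ 2 - ‖c₁ - g x‖ ^ 2) / (2 * ‖c₂ - c₁‖))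
    (hr : r = γ / L) :
    ∀ δ : EuclideanSpace ℝ (Fin D), ‖δ‖ < r →
      ‖g (x + δ) - c₁‖ < ‖g (x + δ) - c₂‖ :=
  robustness_guarantee_general D d L hL g hLip c₁ c₂ hne x γ r hγ hr
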